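/- Let F, F₂ ∈ ℝ² and a > 0 with 2a > dist(F, F₂), and let ε = {X ∈ ℝ² : dist(X, F) + dist(X, F₂) = 2a} be an ellipse with focus F. Let d₀ be a line not passing through F and p₀ = {X ∈ ℝ² : dist(X, F) = dist(X, d₀)} the parabola with focus F and directrix d₀. For θ ∈ ℝ let p_θ be the image of p₀ under the rotation of the plane about F by angle θ. Then there exists a nonzero polynomial function q : ℝ² → ℝ of total degree at most 2 such that: for every θ ∈ ℝ and all distinct points P, Q ∈ ε ∩ p_θ, there exist c, t₀ ∈ ℝ with q(P + t·(Q − P)) = c·(t − t₀)² for all t ∈ ℝ; that is, the line through P and Q is tangent to the fixed conic {q = 0}. -/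

import Mathlib

/-!
Both curves are conics with focus `F`. A point `X` of the ellipse satisfies
`|XF| = k + ⟪X - F, u⟫` with `u = (F₂ - F) / (2a)`, and a point of the rotated parabola satisfies
`|XF| = δ - ⟪X - F, ν⟫`, where `δ = dist(F, d₀)` and `ν` is the rotated unit normal of `d₀`.
Subtracting, the common chord lies on the line `⟪X - F, u + ν⟫ = δ - k`, on which the fixed conic
`q X = |XF|² - (δ - k - ⟪X - F, u⟫)²` (focus `F`, eccentricity `‖u‖ < 1`) restricts to
`|XF|² - ⟪X - F, ν⟫² = ω(ν, X - F)²` (`ω` the area form), the square of an affine function along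
the chord. Its slope is nonzero because distinct points of a parabola never lie on a line parallel
to its axis.
-/

open RealInnerProductSpace

noncomputable section

/-- The Euclidean plane. -/
abbrev Pt := EuclideanSpace ℝ (Fin 2)

/-- `L` is a line in the plane. -/
def IsLine (L : Set Pt) : Prop :=
  ∃ P v : Pt, v ≠ 0 ∧ L = {X | ∃ t : ℝ, X = P + t • v}

/-- Rotation of the vector `v` by angle `θ` about the origin. -/
def rotVec (θ : ℝ) (v : Pt) : Pt :=
  WithLp.toLp 2 ![Real.cos θ * v 0 - Real.sin θ * v 1, Real.sin θ * v 0 + Real.cos θ * v 1]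

/-- Rotation of the plane about the point `F` by angle `θ`. -/
def rotAbout (F : Pt) (θ : ℝ) (X : Pt) : Pt := F + rotVec θ (X - F)

/-- `q` is a nonzero polynomial function of total degree at most 2. -/
def IsNonzeroQuadratic (q : Pt → ℝ) : Prop :=
  ∃ A B C D E G : ℝ, ¬(A = 0 ∧ B = 0 ∧ C = 0 ∧ D = 0 ∧ E = 0 ∧ G = 0) ∧
    ∀ X : Pt, q X = A * (X 0) ^ 2 + B * (X 0) * (X 1) + C * (X 1) ^ 2
      + D * (X 0) + E * (X 1) + G

/-- The line through the distinct points `P` and `Q` is tangent to the conic `{q = 0}`: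
the restriction of `q` to the affine parameterization `t ↦ P + t • (Q - P)` is a perfect
square `c * (t - t₀) ^ 2`. -/
def LineTangentToConic (q : Pt → ℝ) (P Q : Pt) : Prop :=
  ∃ c t₀ : ℝ, ∀ t : ℝ, q (P + t • (Q - P)) = c * (t - t₀) ^ 2

open Module
open scoped EuclideanSpace

section InnerProductSpace

variable {V : Type*} [NormedAddCommGroup V] [InnerProductSpace ℝ V]

def focalConic (f u : V) (m : ℝ) (x : V) : ℝ := ‖x - f‖ ^ 2 - (m - ⟪x - f, u⟫) ^ 2

theorem infDist_setOf_inner_sub_eq {n : V} (hn : ‖n‖ = 1) (x p : V) (c : ℝ) :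
    Metric.infDist x {y | ⟪y - p, n⟫ = c} = |⟪x - p, n⟫ - c| := by
  set y₀ := x - (⟪x - p, n⟫ - c) • n
  have hy₀ : y₀ ∈ {y | ⟪y - p, n⟫ = c} := by
    rw [Set.mem_ofPred_eq, sub_right_comm, inner_sub_left, real_inner_smul_left,
      real_inner_self_eq_norm_sq, hn]
    ring
  refine le_antisymm ?_ ((Metric.le_infDist ⟨y₀, hy₀⟩).2 fun y hy => ?_)
  · calc Metric.infDist x _ ≤ dist x y₀ := Metric.infDist_le_dist_of_mem hy₀
      _ = _ := by simp [y₀, norm_smul, hn]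
  · calc |⟪x - p, n⟫ - c| = |⟪x - y, n⟫| := by
          rw [← hy.out, ← inner_sub_left, sub_sub_sub_cancel_right]
      _ ≤ ‖x - y‖ * ‖n‖ := abs_real_inner_le_norm _ _
      _ = dist x y := by rw [hn, mul_one, dist_eq_norm]

theorem dist_eq_add_inner_of_dist_add_dist_eq {a : ℝ} (ha : a ≠ 0) {x f₁ f₂ : V}
    (h : dist x f₁ + dist x f₂ = 2 * a) :
    dist x f₁ = a - dist f₂ f₁ ^ 2 / (4 * a) + ⟪x - f₁, (2 * a)⁻¹ • (f₂ - f₁)⟫ := by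
  have hsq : dist x f₂ ^ 2 = (2 * a - dist x f₁) ^ 2 := by rw [← h]; ring
  have hexp : dist x f₂ ^ 2 = dist x f₁ ^ 2 - 2 * ⟪x - f₁, f₂ - f₁⟫ + dist f₂ f₁ ^ 2 := by
    simp only [dist_eq_norm]
    rw [← norm_sub_sq_real, sub_sub_sub_cancel_right]
  rw [real_inner_smul_right]
  field_simp
  linear_combination 2 * (hsq - hexp)

theorem dist_eq_sub_inner_of_dist_eq_abs {n : V} (hn : ‖n‖ ≤ 1) {δ : ℝ} (hδ : 0 < δ)
    {x f : V} (h : dist x f = |⟪x - f, n⟫ - δ|) : dist x f = δ - ⟪x - f, n⟫ := by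
  have hle : ⟪x - f, n⟫ ≤ dist x f := calc
    ⟪x - f, n⟫ ≤ ‖x - f‖ * ‖n‖ := real_inner_le_norm _ _
    _ ≤ ‖x - f‖ := mul_le_of_le_one_right (norm_nonneg _) hn
    _ = dist x f := (dist_eq_norm _ _).symm
  rcases abs_cases (⟪x - f, n⟫ - δ) with ⟨habs, -⟩ | ⟨habs, -⟩ <;> rw [habs] at h <;> linarith

end InnerProductSpace

namespace Orientation

variable {E : Type*} [NormedAddCommGroup E] [InnerProductSpace ℝ E] [Fact (finrank ℝ E = 2)]
  (o : Orientation ℝ E (Fin 2))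

local notation "ω" => o.areaForm

theorem eq_zero_of_inner_eq_zero_of_areaForm_eq_zero {a x : E} (ha : a ≠ 0)
    (h₁ : ⟪a, x⟫ = 0) (h₂ : ω a x = 0) : x = 0 :=
  (o.eq_zero_or_eq_zero_of_kahler_eq_zero (by simp [kahler_apply_apply, h₁, h₂])).resolve_left ha

theorem setOf_eq_add_smul_eq {v : E} (hv : v ≠ 0) (p : E) :
    {x | ∃ t : ℝ, x = p + t • v} = {x | ω v (x - p) = 0} := by
  ext x
  constructor
  · rintro ⟨t, rfl⟩
    simp
  · intro hx
    refine ⟨⟪v, x - p⟫ / ‖v‖ ^ 2, ?_⟩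
    have hperp : x - p - (⟪v, x - p⟫ / ‖v‖ ^ 2) • v = 0 := by
      refine o.eq_zero_of_inner_eq_zero_of_areaForm_eq_zero hv ?_ ?_
      · rw [inner_sub_right, real_inner_smul_right, real_inner_self_eq_norm_sq]
        field_simp
        ring
      · simpa using hx
    rw [← sub_eq_zero, ← hperp]
    abel

theorem areaForm_sq_of_dist_eq_sub_inner {ν x f : E} (hν : ‖ν‖ = 1) {δ : ℝ}
    (h : dist x f = δ - ⟪x - f, ν⟫) : ω ν (x - f) ^ 2 = δ ^ 2 - 2 * δ * ⟪x - f, ν⟫ := by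
  have := o.inner_sq_add_areaForm_sq ν (x - f)
  rw [hν, ← dist_eq_norm, h, real_inner_comm] at this
  linear_combination this

theorem areaForm_sub_ne_zero_of_dist_eq_sub_inner {ν x y f : E} (hν : ‖ν‖ = 1) {δ : ℝ}
    (hδ : δ ≠ 0) (hx : dist x f = δ - ⟪x - f, ν⟫) (hy : dist y f = δ - ⟪y - f, ν⟫)
    (hxy : x ≠ y) : ω ν (y - x) ≠ 0 := by
  intro h
  have hω : ω ν (y - f) = ω ν (x - f) := by
    rw [← sub_eq_zero, ← map_sub, sub_sub_sub_cancel_right, h]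
  have hinner : ⟪y - x, ν⟫ = 0 := by
    have hsq := (o.areaForm_sq_of_dist_eq_sub_inner hν hy).symm.trans
      (hω ▸ o.areaForm_sq_of_dist_eq_sub_inner hν hx)
    rw [← sub_sub_sub_cancel_right y x f, inner_sub_left]
    apply mul_left_cancel₀ (mul_ne_zero two_ne_zero hδ)
    linear_combination -hsq
  have hν₀ : ν ≠ 0 := norm_ne_zero_iff.1 (hν ▸ one_ne_zero)
  exact hxy (sub_eq_zero.1 (o.eq_zero_of_inner_eq_zero_of_areaForm_eq_zero hν₀
    (real_inner_comm ν _ ▸ hinner) h)).symm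

theorem focalConic_eq_areaForm_sq {f u ν x : E} {m : ℝ} (hν : ‖ν‖ = 1)
    (hx : ⟪x - f, u + ν⟫ = m) : focalConic f u m x = ω ν (x - f) ^ 2 := by
  have := o.inner_sq_add_areaForm_sq ν (x - f)
  rw [hν, real_inner_comm] at this
  rw [focalConic, ← hx, inner_add_right]
  linear_combination -this

end Orientation

theorem exists_eq_setOf_inner_sub_eq {E : Type*} [NormedAddCommGroup E] [InnerProductSpace ℝ E]
    [Fact (finrank ℝ E = 2)] {p v f : E} (hv : v ≠ 0)
    (hf : f ∉ {x | ∃ t : ℝ, x = p + t • v}) :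
    ∃ n : E, ‖n‖ = 1 ∧ ∃ δ > 0, {x | ∃ t : ℝ, x = p + t • v} = {x | ⟪x - f, n⟫ = δ} := by
  have : FiniteDimensional ℝ E := .of_fact_finrank_eq_two
  let o : Orientation ℝ E (Fin 2) := (finBasisOfFinrankEq ℝ E Fact.out).orientation
  rw [o.setOf_eq_add_smul_eq hv p] at hf ⊢
  set c := o.areaForm v (p - f)
  have hshift : ∀ x, o.areaForm v (x - f) = o.areaForm v (x - p) + c := fun x => by
    rw [← map_add, sub_add_sub_cancel]
  have hc : c ≠ 0 := fun hc => hf (by simpa [hc] using (hshift f).symm)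
  have hv' : ‖v‖ ≠ 0 := norm_ne_zero_iff.2 hv
  refine ⟨(|c| / (c * ‖v‖)) • o.rightAngleRotation v, ?_, |c| / ‖v‖, by positivity, ?_⟩
  · rw [norm_smul, LinearIsometryEquiv.norm_map, Real.norm_eq_abs, abs_div, abs_mul, abs_abs,
      abs_norm]
    field_simp
  · ext x
    simp only [Set.mem_ofPred_eq, real_inner_smul_right, real_inner_comm (o.rightAngleRotation v),
      o.inner_rightAngleRotation_left, hshift]
    have hscale : |c| / (c * ‖v‖) ≠ 0 := by positivity
    rw [show |c| / ‖v‖ = |c| / (c * ‖v‖) * c by field_simp, mul_right_inj' hscale, add_eq_right]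

theorem inner_rotVec_rotVec (θ : ℝ) (x y : Pt) : ⟪rotVec θ x, rotVec θ y⟫ = ⟪x, y⟫ := by
  simp only [rotVec, PiLp.inner_apply, Fin.sum_univ_two, Matrix.cons_val_zero,
    Matrix.cons_val_one, RCLike.inner_apply, conj_trivial]
  linear_combination (x 0 * y 0 + x 1 * y 1) * Real.sin_sq_add_cos_sq θ

theorem norm_rotVec (θ : ℝ) (x : Pt) : ‖rotVec θ x‖ = ‖x‖ := by
  rw [norm_eq_sqrt_real_inner, norm_eq_sqrt_real_inner, inner_rotVec_rotVec]

theorem rotAbout_sub (F : Pt) (θ : ℝ) (X : Pt) : rotAbout F θ X - F = rotVec θ (X - F) :=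
  add_sub_cancel_left F _

theorem dist_eq_sub_inner_of_mem_image_rotAbout {F n : Pt} (hn : ‖n‖ = 1) {δ : ℝ} (hδ : 0 < δ)
    {θ : ℝ} {R : Pt}
    (hR : R ∈ rotAbout F θ '' {X | dist X F = Metric.infDist X {Y | ⟪Y - F, n⟫ = δ}}) :
    dist R F = δ - ⟪R - F, rotVec θ n⟫ := by
  obtain ⟨X, hX, rfl⟩ := hR
  rw [Set.mem_ofPred_eq, infDist_setOf_inner_sub_eq hn] at hX
  rw [dist_eq_norm, rotAbout_sub, norm_rotVec, inner_rotVec_rotVec, ← dist_eq_norm]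
  exact dist_eq_sub_inner_of_dist_eq_abs hn.le hδ hX

theorem isNonzeroQuadratic_focalConic {F u : Pt} (hu : ‖u‖ < 1) (m : ℝ) :
    IsNonzeroQuadratic (focalConic F u m) := by
  refine ⟨1 - u 0 ^ 2, -2 * u 0 * u 1, 1 - u 1 ^ 2,
    -2 * F 0 * (1 - u 0 ^ 2) + 2 * u 0 * u 1 * F 1 + 2 * m * u 0,
    -2 * F 1 * (1 - u 1 ^ 2) + 2 * u 0 * u 1 * F 0 + 2 * m * u 1,
    (1 - u 0 ^ 2) * F 0 ^ 2 - 2 * u 0 * u 1 * F 0 * F 1 + (1 - u 1 ^ 2) * F 1 ^ 2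
      - 2 * m * u 0 * F 0 - 2 * m * u 1 * F 1 - m ^ 2, ?_, fun X => ?_⟩
  · have hu2 : u 0 ^ 2 + u 1 ^ 2 < 1 := by
      simpa [EuclideanSpace.real_norm_sq_eq, Fin.sum_univ_two] using
        (sq_lt_one_iff₀ (norm_nonneg u)).2 hu
    rintro ⟨hA, -⟩
    nlinarith [sq_nonneg (u 1)]
  · simp only [focalConic, EuclideanSpace.real_norm_sq_eq, PiLp.inner_apply, Fin.sum_univ_two,
      PiLp.sub_apply, RCLike.inner_apply, conj_trivial]
    ring

theorem LineTangentToConic.of_eq_sq {q : Pt → ℝ} {P Q : Pt} {α β : ℝ} (hα : α ≠ 0)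
    (h : ∀ t, q (P + t • (Q - P)) = (α * t + β) ^ 2) : LineTangentToConic q P Q :=
  ⟨α ^ 2, -β / α, fun t => by rw [h]; field_simp; ring⟩

theorem lineTangentToConic_focalConic {F u ν P Q : Pt} {k δ : ℝ} (hν : ‖ν‖ = 1) (hδ : δ ≠ 0)
    (hPe : dist P F = k + ⟪P - F, u⟫) (hQe : dist Q F = k + ⟪Q - F, u⟫)
    (hPp : dist P F = δ - ⟪P - F, ν⟫) (hQp : dist Q F = δ - ⟪Q - F, ν⟫) (hPQ : P ≠ Q) :
    LineTangentToConic (focalConic F u (δ - k)) P Q := by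
  let o : Orientation ℝ Pt (Fin 2) := (EuclideanSpace.basisFun (Fin 2) ℝ).toBasis.orientation
  have hPc : ⟪P - F, u + ν⟫ = δ - k := by rw [inner_add_right]; linarith
  have hQc : ⟪Q - F, u + ν⟫ = δ - k := by rw [inner_add_right]; linarith
  refine .of_eq_sq (o.areaForm_sub_ne_zero_of_dist_eq_sub_inner hν hδ hPp hQp hPQ)
    (β := o.areaForm ν (P - F)) fun t => ?_
  have hXt : P + t • (Q - P) - F = (P - F) + t • (Q - P) := by abel
  have hXc : ⟪P + t • (Q - P) - F, u + ν⟫ = δ - k := by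
    rw [show P + t • (Q - P) - F = (1 - t) • (P - F) + t • (Q - F) by module, inner_add_left,
      real_inner_smul_left, real_inner_smul_left, hPc, hQc]
    ring
  rw [o.focalConic_eq_areaForm_sq hν hXc, hXt, map_add, map_smul, smul_eq_mul]
  ring

/-- **Theorem 4.** Given an ellipse `ε` with focus `F` and a parabola with focus `F`,
as the parabola rotates about `F`, the common chord of the ellipse and the parabola
remains tangent to some fixed conic. -/
theorem common_chord_tangent_fixed_conic
    (F F₂ : Pt) (a : ℝ) (ha : 0 < a) (hfoci : dist F F₂ < 2 * a)
    (d₀ : Set Pt) (hd₀ : IsLine d₀) (hF : F ∉ d₀) :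
    ∃ q : Pt → ℝ, IsNonzeroQuadratic q ∧
      ∀ θ : ℝ, ∀ P Q : Pt,
        dist P F + dist P F₂ = 2 * a →
        dist Q F + dist Q F₂ = 2 * a →
        P ∈ rotAbout F θ '' {X : Pt | dist X F = Metric.infDist X d₀} →
        Q ∈ rotAbout F θ '' {X : Pt | dist X F = Metric.infDist X d₀} →
        P ≠ Q →
        LineTangentToConic q P Q := by
  obtain ⟨p, v, hv, rfl⟩ := hd₀
  obtain ⟨n, hn, δ, hδ, hd₀⟩ := exists_eq_setOf_inner_sub_eq hv hF
  set u := (2 * a)⁻¹ • (F₂ - F)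
  set k := a - dist F₂ F ^ 2 / (4 * a)
  have hu : ‖u‖ < 1 := by
    rw [norm_smul, norm_inv, Real.norm_of_nonneg (by positivity), ← dist_eq_norm, dist_comm,
      inv_mul_lt_one₀ (by positivity)]
    exact hfoci
  refine ⟨focalConic F u (δ - k), isNonzeroQuadratic_focalConic hu _,
    fun θ P Q hPe hQe hPp hQp hPQ => ?_⟩
  rw [hd₀] at hPp hQp
  exact lineTangentToConic_focalConic ((norm_rotVec θ n).trans hn) hδ.ne'
    (dist_eq_add_inner_of_dist_add_dist_eq ha.ne' hPe)
    (dist_eq_add_inner_of_dist_add_dist_eq ha.ne' hQe)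
    (dist_eq_sub_inner_of_mem_image_rotAbout hn hδ hPp)
    (dist_eq_sub_inner_of_mem_image_rotAbout hn hδ hQp) hPQ
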